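/- arXiv:1607.05536 — 2 statements merged into one kernel-verified Lean document; each statement's English description precedes it below -/
import Mathlib

section
/- For the quantity R := ρ_τ(ε − a) − ρ_τ(ε) − a·D, with D = (1−τ)·1_{ε<0} − τ·1_{ε≥0}, one has the pointwise bound |R| ≤ |a|·1_{|ε| < |a|} for all reals ε and a. -/
set_option maxHeartbeats 1000000


noncomputable def rho (τ u : ℝ) : ℝ := u * (τ - if u < 0 then 1 else 0)

noncomputable def Dfun (τ u : ℝ) : ℝ :=
  (1 - τ) * (if u < 0 then 1 else 0) - τ * (if 0 ≤ u then 1 else 0)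

theorem remainder_bound (τ : ℝ) (hτ : τ ∈ Set.Ioo (0:ℝ) 1) (ε a : ℝ) :
    |rho τ (ε - a) - rho τ ε - a * Dfun τ ε| ≤ |a| * (if |ε| < |a| then 1 else 0) := by
  obtain ⟨h0, h1⟩ := hτ
  unfold rho Dfun
  rcases abs_cases a with ⟨ha, ha2⟩ | ⟨ha, ha2⟩ <;>
  rcases abs_cases ε with ⟨he, he2⟩ | ⟨he, he2⟩ <;>
  split_ifs <;> rw [abs_le] <;> constructor <;> ring_nf <;> linarith
end

section
/- Let ε₁,…,εₙ be independent real random variables and Rᵢ = ρ_τ(εᵢ − aᵢ) − ρ_τ(εᵢ) − aᵢDᵢ with Dᵢ = (1−τ)1_{εᵢ<0} − τ1_{εᵢ≥0} and aᵢ real constants. Then Var(∑ᵢ Rᵢ) ≤ ∑ᵢ E[Rᵢ²] ≤ ∑ᵢ aᵢ²·P(|εᵢ| < |aᵢ|). -/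
open MeasureTheory ProbabilityTheory Finset

/-- The paper's `Rᵢ` is `knightRemainder τ aᵢ εᵢ`. -/
noncomputable def knightRemainder (τ a u : ℝ) : ℝ := rho τ (u - a) - rho τ u - a * Dfun τ u

lemma measurable_knightRemainder (τ a : ℝ) : Measurable (knightRemainder τ a) := by
  have hlt : MeasurableSet {u : ℝ | u < 0} := measurableSet_lt measurable_id measurable_const
  have hle : MeasurableSet {u : ℝ | 0 ≤ u} := measurableSet_le measurable_const measurable_id
  have hrho : Measurable (rho τ) :=
    measurable_id.mul (measurable_const.sub (Measurable.ite hlt measurable_const measurable_const))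
  have hD : Measurable (Dfun τ) :=
    (measurable_const.mul (Measurable.ite hlt measurable_const measurable_const)).sub
      (measurable_const.mul (Measurable.ite hle measurable_const measurable_const))
  exact ((hrho.comp (measurable_id.sub measurable_const)).sub hrho).sub (hD.const_mul a)

lemma knightRemainder_eq (τ a u : ℝ) :
    knightRemainder τ a u =
      if 0 ≤ u then (if u < a then a - u else 0) else (if a ≤ u then u - a else 0) := by
  unfold knightRemainder rho Dfun
  split_ifs <;> first | ring1 | linarith

lemma abs_knightRemainder_le_indicator (τ a u : ℝ) :
    |knightRemainder τ a u| ≤ {x : ℝ | |x| < |a|}.indicator (fun _ => |a|) u := by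
  rw [knightRemainder_eq]
  rcases lt_or_ge |u| |a| with h | h
  · rw [Set.indicator_of_mem (s := {x : ℝ | |x| < |a|}) h, abs_le]
    split_ifs <;> constructor <;> cases abs_cases a <;> cases abs_cases u <;> linarith
  · rw [Set.indicator_of_notMem (s := {x : ℝ | |x| < |a|}) (not_lt.mpr h), abs_nonpos_iff]
    split_ifs <;> cases abs_cases a <;> cases abs_cases u <;> linarith

lemma abs_knightRemainder_le (τ a u : ℝ) : |knightRemainder τ a u| ≤ |a| :=
  (abs_knightRemainder_le_indicator τ a u).trans
    (Set.indicator_le_self' (fun _ _ => abs_nonneg a) u)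

lemma knightRemainder_sq_le_indicator (τ a u : ℝ) :
    knightRemainder τ a u ^ 2 ≤ {x : ℝ | |x| < |a|}.indicator (fun _ => a ^ 2) u := by
  calc knightRemainder τ a u ^ 2 = |knightRemainder τ a u| ^ 2 := (sq_abs _).symm
    _ ≤ ({x : ℝ | |x| < |a|}.indicator (fun _ => |a|) u) ^ 2 :=
      pow_le_pow_left₀ (abs_nonneg _) (abs_knightRemainder_le_indicator τ a u) 2
    _ = {x : ℝ | |x| < |a|}.indicator (fun _ => a ^ 2) u := by
      simp only [Set.indicator_apply]
      split_ifs <;> simp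

section Probability

variable {Ω : Type*} [MeasurableSpace Ω] {μ : Measure Ω}

lemma variance_sum_le_sum_integral_sq [IsProbabilityMeasure μ] {ι : Type*} [Fintype ι]
    {X : ι → Ω → ℝ} (hX : ∀ i, MemLp (X i) 2 μ) (hind : Pairwise fun i j => X i ⟂ᵢ[μ] X j) :
    variance (fun ω => ∑ i, X i ω) μ ≤ ∑ i, ∫ ω, X i ω ^ 2 ∂μ := by
  have hsum : (fun ω => ∑ i, X i ω) = ∑ i, X i := by
    funext ω
    rw [Finset.sum_apply]
  rw [hsum, IndepFun.variance_sum (fun i _ => hX i) (fun i _ j _ hij => hind hij)]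
  exact sum_le_sum fun i _ => variance_le_expectation_sq (hX i).aestronglyMeasurable

variable [IsFiniteMeasure μ] {X : Ω → ℝ} (τ a : ℝ)

lemma memLp_knightRemainder_comp (hX : AEMeasurable X μ) :
    MemLp (fun ω => knightRemainder τ a (X ω)) 2 μ :=
  MemLp.of_bound ((measurable_knightRemainder τ a).comp_aemeasurable hX).aestronglyMeasurable |a|
    (ae_of_all _ fun ω => (Real.norm_eq_abs _).trans_le (abs_knightRemainder_le τ a (X ω)))

lemma integral_knightRemainder_sq_le (hX : Measurable X) :
    ∫ ω, knightRemainder τ a (X ω) ^ 2 ∂μ ≤ a ^ 2 * μ.real {ω | |X ω| < |a|} := by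
  have hs : MeasurableSet {ω | |X ω| < |a|} := measurableSet_lt hX.abs measurable_const
  calc ∫ ω, knightRemainder τ a (X ω) ^ 2 ∂μ
      ≤ ∫ ω, {ω | |X ω| < |a|}.indicator (fun _ => a ^ 2) ω ∂μ :=
        integral_mono_of_nonneg (ae_of_all _ fun _ => sq_nonneg _)
          ((integrable_const _).indicator hs)
          (ae_of_all _ fun ω => knightRemainder_sq_le_indicator τ a (X ω))
    _ = a ^ 2 * μ.real {ω | |X ω| < |a|} := by
      rw [integral_indicator_const _ hs, smul_eq_mul, mul_comm]

end Probability

theorem variance_sum_bound_general {Ω : Type*} [MeasurableSpace Ω] (μ : Measure Ω)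
    [IsProbabilityMeasure μ] (τ : ℝ)
    (n : ℕ) (ε : Fin n → Ω → ℝ) (hε : ∀ i, Measurable (ε i))
    (hind : iIndepFun ε μ)
    (a : Fin n → ℝ) :
    variance (fun ω => ∑ i, (rho τ (ε i ω - a i) - rho τ (ε i ω) - a i * Dfun τ (ε i ω))) μ
      ≤ ∑ i, ∫ ω, (rho τ (ε i ω - a i) - rho τ (ε i ω) - a i * Dfun τ (ε i ω)) ^ 2 ∂μ ∧
    ∑ i, ∫ ω, (rho τ (ε i ω - a i) - rho τ (ε i ω) - a i * Dfun τ (ε i ω)) ^ 2 ∂μ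
      ≤ ∑ i, a i ^ 2 * (μ {ω | |ε i ω| < |a i|}).toReal := by
  have hindR : iIndepFun (fun i ω => knightRemainder τ (a i) (ε i ω)) μ :=
    hind.comp (fun i => knightRemainder τ (a i)) fun i => measurable_knightRemainder τ (a i)
  exact ⟨variance_sum_le_sum_integral_sq
      (fun i => memLp_knightRemainder_comp τ (a i) (hε i).aemeasurable)
      (fun i j hij => hindR.indepFun hij),
    sum_le_sum fun i _ => integral_knightRemainder_sq_le τ (a i) (hε i)⟩

theorem variance_sum_bound {Ω : Type*} [MeasurableSpace Ω] (μ : Measure Ω)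
    [IsProbabilityMeasure μ] (τ : ℝ) (hτ : τ ∈ Set.Ioo (0:ℝ) 1)
    (n : ℕ) (ε : Fin n → Ω → ℝ) (hε : ∀ i, Measurable (ε i))
    (hind : iIndepFun ε μ)
    (hint : ∀ i, Integrable (ε i) μ) (a : Fin n → ℝ) :
    variance (fun ω => ∑ i, (rho τ (ε i ω - a i) - rho τ (ε i ω) - a i * Dfun τ (ε i ω))) μ
      ≤ ∑ i, ∫ ω, (rho τ (ε i ω - a i) - rho τ (ε i ω) - a i * Dfun τ (ε i ω)) ^ 2 ∂μ ∧
    ∑ i, ∫ ω, (rho τ (ε i ω - a i) - rho τ (ε i ω) - a i * Dfun τ (ε i ω)) ^ 2 ∂μ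
      ≤ ∑ i, a i ^ 2 * (μ {ω | |ε i ω| < |a i|}).toReal :=
  variance_sum_bound_general μ τ n ε hε hind a
end
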